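/- arXiv:1902.07014 — 2 statements merged into one kernel-verified Lean document; each statement's English description precedes it below -/
import Mathlib

section
/- If H satisfies H(t+1) = max(H(t) + e(t), 0), H(0) = 0, e(t) = D(t) − D_av with D(t) bounded, and H is mean-rate stable in the sense that H(K)/K → 0 as K → ∞, then limsup_{K→∞} (1/K) Σ_{t=0}^{K−1} D(t) ≤ D_av. -/
/-- Theorem 2 (deterministic core): mean-rate stability of the virtual queue implies the
time-average constraint `D̄ ≤ D_av`. -/
theorem mean_rate_stable_implies_constraint (H D : ℕ → ℝ) (Dav : ℝ)
    (h0 : H 0 = 0)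
    (hrec : ∀ t, H (t + 1) = max (H t + (D t - Dav)) 0)
    (hbdd : ∃ C : ℝ, ∀ t, |D t| ≤ C)
    (hstable : Filter.Tendsto (fun K : ℕ => H K / K) Filter.atTop (nhds 0)) :
    Filter.limsup (fun K : ℕ => (1 / (K : ℝ)) * ∑ t ∈ Finset.range K, D t)
      Filter.atTop ≤ Dav := by
  obtain ⟨C, hC⟩ := hbdd
  -- key: H K ≥ ∑_{t<K} (D t - Dav)
  have key : ∀ K : ℕ, (∑ t ∈ Finset.range K, (D t - Dav)) ≤ H K := by
    intro K
    induction K with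
    | zero => simp [h0]
    | succ n ih =>
      rw [Finset.sum_range_succ, hrec n]
      exact le_max_of_le_left (by linarith)
  -- hence average ≤ H K / K + Dav for K ≥ 1
  have hle : ∀ᶠ K : ℕ in Filter.atTop,
      (1 / (K : ℝ)) * ∑ t ∈ Finset.range K, D t ≤ H K / K + Dav := by
    filter_upwards [Filter.eventually_ge_atTop 1] with K hK
    have hKpos : (0 : ℝ) < K := by exact_mod_cast hK
    have h1 : (∑ t ∈ Finset.range K, D t) - K * Dav ≤ H K := by
      have := key K
      rw [Finset.sum_sub_distrib, Finset.sum_const, Finset.card_range,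
        nsmul_eq_mul] at this
      linarith
    have h2 : H K / K * K = H K := div_mul_cancel₀ _ hKpos.ne'
    rw [one_div, inv_mul_eq_div, div_le_iff₀ hKpos]
    nlinarith [h1, h2]
  have hg : Filter.Tendsto (fun K : ℕ => H K / K + Dav) Filter.atTop (nhds Dav) := by
    simpa using hstable.add tendsto_const_nhds
  have hcob : Filter.IsCoboundedUnder (· ≤ ·) Filter.atTop
      (fun K : ℕ => (1 / (K : ℝ)) * ∑ t ∈ Finset.range K, D t) := by
    refine Filter.isCoboundedUnder_le_of_eventually_le Filter.atTop (x := -C) ?_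
    filter_upwards with K
    have hC0 : 0 ≤ C := (abs_nonneg _).trans (hC 0)
    have habs : |∑ t ∈ Finset.range K, D t| ≤ K * C := by
      calc |∑ t ∈ Finset.range K, D t| ≤ ∑ t ∈ Finset.range K, |D t| :=
        Finset.abs_sum_le_sum_abs _ _
      _ ≤ ∑ _t ∈ Finset.range K, C := Finset.sum_le_sum fun t _ => hC t
      _ = K * C := by simp [mul_comm]
    have hlow : -(K * C) ≤ ∑ t ∈ Finset.range K, D t := (abs_le.mp habs).1
    rcases Nat.eq_zero_or_pos K with h | h
    · simp [h]; linarith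
    · have hKpos : (0 : ℝ) < K := by exact_mod_cast h
      have hinv : (0 : ℝ) ≤ 1 / K := by positivity
      have := mul_le_mul_of_nonneg_left hlow hinv
      calc -C = (1 / (K : ℝ)) * (-(K * C)) := by field_simp
      _ ≤ _ := this
  calc Filter.limsup (fun K : ℕ => (1 / (K : ℝ)) * ∑ t ∈ Finset.range K, D t)
        Filter.atTop
      ≤ Filter.limsup (fun K : ℕ => H K / K + Dav) Filter.atTop :=
        Filter.limsup_le_limsup hle hcob hg.isBoundedUnder_le
    _ = Dav := hg.limsup_eq
end

section
/- Suppose for all K ≥ 1: L(K) − L(0) + V Σ_{t=0}^{K−1}(P(t) − η(t)·R(t)) ≤ K·B + K·V·P* − V·R*·Σ_{t=0}^{K−1} η(t), where L(K) ≥ 0, L(0) = 0, P* ≤ R*·η_opt, R* > 0, V > 0, B ≥ 0, P(t) − η(t)R(t) ≥ 0 for all t, and (1/K)Σ_{t=0}^{K−1} η(t) converges to η as K → ∞. Then η ≤ B/(V·R*) + η_opt. -/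
/-!
For every horizon `K ≥ 1` the Lyapunov drift `L K - L 0` and the penalty sum are nonnegative, so
the drift-plus-penalty inequality leaves `V R* ∑ η ≤ K (B + V P*) ≤ K (B + V R* ηopt)`. Dividing by
`K V R*` bounds every time average of `η` by `B / (V R*) + ηopt`, and the bound passes to the limit.
-/

open Finset Filter

lemma average_le_div_of_mul_sum_le {x : ℕ → ℝ} {b c : ℝ} {K : ℕ} (hc : 0 < c) (hK : 0 < K)
    (h : c * ∑ t ∈ range K, x t ≤ K * b) : 1 / (K : ℝ) * ∑ t ∈ range K, x t ≤ b / c := by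
  have hKpos : (0 : ℝ) < K := by exact_mod_cast hK
  rw [one_div, inv_mul_le_iff₀ hKpos, ← mul_div_assoc, le_div_iff₀ hc]
  linarith

theorem lyapunov_performance_bound_general (P R η : ℕ → ℝ) (L : ℕ → ℝ)
    (B V Rstar Pstar ηopt ηlim : ℝ)
    (hV : 0 < V) (hRstar : 0 < Rstar)
    (hL0 : L 0 = 0) (hLpos : ∀ K, 0 ≤ L K)
    (hPstar : Pstar ≤ Rstar * ηopt)
    (hnonneg : ∀ t, 0 ≤ P t - η t * R t)
    (hsum : ∀ K, 1 ≤ K →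
      L K - L 0 + V * ∑ t ∈ Finset.range K, (P t - η t * R t) ≤
        K * B + K * V * Pstar - V * Rstar * ∑ t ∈ Finset.range K, η t)
    (hconv : Filter.Tendsto (fun K : ℕ => (1 / (K : ℝ)) * ∑ t ∈ Finset.range K, η t)
      Filter.atTop (nhds ηlim)) :
    ηlim ≤ B / (V * Rstar) + ηopt := by
  have hVR : 0 < V * Rstar := mul_pos hV hRstar
  have hbound : (B + V * Rstar * ηopt) / (V * Rstar) = B / (V * Rstar) + ηopt := by
    field_simp
  rw [← hbound]
  refine le_of_tendsto hconv (eventually_atTop.2 ⟨1, fun K hK => ?_⟩)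
  refine average_le_div_of_mul_sum_le hVR hK ?_
  have hdrift : 0 ≤ L K - L 0 + V * ∑ t ∈ range K, (P t - η t * R t) := by
    rw [hL0, sub_zero]
    exact add_nonneg (hLpos K) (mul_nonneg hV.le (sum_nonneg fun t _ => hnonneg t))
  have hpenalty : K * V * Pstar ≤ K * V * (Rstar * ηopt) :=
    mul_le_mul_of_nonneg_left hPstar (by positivity)
  linarith [hsum K hK]

/-- Performance bound (equation (59)): the achieved energy efficiency `η` is within
`B / (V * Rstar)` of the optimum `ηopt`. -/
theorem lyapunov_performance_bound (P R η : ℕ → ℝ) (L : ℕ → ℝ)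
    (B V Rstar Pstar ηopt ηlim : ℝ)
    (hB : 0 ≤ B) (hV : 0 < V) (hRstar : 0 < Rstar)
    (hL0 : L 0 = 0) (hLpos : ∀ K, 0 ≤ L K)
    (hPstar : Pstar ≤ Rstar * ηopt)
    (hnonneg : ∀ t, 0 ≤ P t - η t * R t)
    (hsum : ∀ K, 1 ≤ K →
      L K - L 0 + V * ∑ t ∈ Finset.range K, (P t - η t * R t) ≤
        K * B + K * V * Pstar - V * Rstar * ∑ t ∈ Finset.range K, η t)
    (hconv : Filter.Tendsto (fun K : ℕ => (1 / (K : ℝ)) * ∑ t ∈ Finset.range K, η t)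
      Filter.atTop (nhds ηlim)) :
    ηlim ≤ B / (V * Rstar) + ηopt :=
  lyapunov_performance_bound_general P R η L B V Rstar Pstar ηopt ηlim hV hRstar hL0 hLpos hPstar
    hnonneg hsum hconv
end
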